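/- arXiv:2004.11576 — 3 statements merged into one kernel-verified Lean document; each statement's English description precedes it below -/
import Mathlib

section
/- Let $\gamma \geq 1$. Then for all $x, y \in \mathbb{R}$, $\big| \operatorname{sgn}(x) |x|^{\gamma} - \operatorname{sgn}(y) |y|^{\gamma} \big| \geq 2^{1-\gamma} |x - y|^{\gamma}$. -/
open Real

private lemma aux_superadd {γ : ℝ} (hγ : 1 ≤ γ) {a b : ℝ} (ha : 0 ≤ a) (hb : 0 ≤ b) :
    a ^ γ + b ^ γ ≤ (a + b) ^ γ := by
  lift a to NNReal using ha
  lift b to NNReal using hb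
  have := NNReal.add_rpow_le_rpow_add a b hγ
  exact_mod_cast this

private lemma aux_convex {γ : ℝ} (hγ : 1 ≤ γ) {a b : ℝ} (ha : 0 ≤ a) (hb : 0 ≤ b) :
    (a + b) ^ γ ≤ (2 : ℝ) ^ (γ - 1) * (a ^ γ + b ^ γ) := by
  lift a to NNReal using ha
  lift b to NNReal using hb
  have := NNReal.rpow_add_le_mul_rpow_add_rpow a b hγ
  exact_mod_cast this

private lemma sign_mul_abs_rpow_of_nonneg {γ : ℝ} (hγ : 1 ≤ γ) {v : ℝ} (hv : 0 ≤ v) :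
    Real.sign v * |v| ^ γ = v ^ γ := by
  rcases eq_or_lt_of_le hv with h | h
  · simp [← h, Real.sign_zero, Real.zero_rpow (by linarith : γ ≠ 0)]
  · rw [Real.sign_of_pos h, abs_of_pos h, one_mul]

private lemma sign_mul_abs_rpow_of_nonpos {γ : ℝ} (hγ : 1 ≤ γ) {v : ℝ} (hv : v ≤ 0) :
    Real.sign v * |v| ^ γ = -(-v) ^ γ := by
  rcases eq_or_lt_of_le hv with h | h
  · subst h; simp [Real.sign_zero, Real.zero_rpow (by linarith : γ ≠ 0)]
  · rw [Real.sign_of_neg h, abs_of_neg h, neg_one_mul]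

private lemma key {γ : ℝ} (hγ : 1 ≤ γ) {x y : ℝ} (hxy : y ≤ x) :
    (2 : ℝ) ^ (1 - γ) * |x - y| ^ γ ≤
      Real.sign x * |x| ^ γ - Real.sign y * |y| ^ γ := by
  have h2 : (2 : ℝ) ^ (1 - γ) ≤ 1 := by
    calc (2 : ℝ) ^ (1 - γ) ≤ (2 : ℝ) ^ (0 : ℝ) :=
          Real.rpow_le_rpow_of_exponent_le one_le_two (by linarith)
      _ = 1 := Real.rpow_zero 2
  have habs : |x - y| = x - y := abs_of_nonneg (by linarith)
  rw [habs]
  have hpow_nonneg : (0 : ℝ) ≤ (x - y) ^ γ := Real.rpow_nonneg (by linarith) _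
  rcases le_or_gt 0 y with hy | hy
  · -- 0 ≤ y ≤ x
    have hx : 0 ≤ x := le_trans hy hxy
    rw [sign_mul_abs_rpow_of_nonneg hγ hx, sign_mul_abs_rpow_of_nonneg hγ hy]
    have h1 : (x - y) ^ γ + y ^ γ ≤ x ^ γ := by
      have := aux_superadd hγ (by linarith : (0:ℝ) ≤ x - y) hy
      simpa using this
    nlinarith [mul_le_mul_of_nonneg_right h2 hpow_nonneg]
  rcases le_or_gt x 0 with hx | hx
  · -- y ≤ x ≤ 0
    rw [sign_mul_abs_rpow_of_nonpos hγ hx, sign_mul_abs_rpow_of_nonpos hγ hy.le]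
    have h1 : (x - y) ^ γ + (-x) ^ γ ≤ (-y) ^ γ := by
      have := aux_superadd hγ (by linarith : (0:ℝ) ≤ x - y) (by linarith : (0:ℝ) ≤ -x)
      have e : x - y + -x = -y := by ring
      rwa [e] at this
    nlinarith [mul_le_mul_of_nonneg_right h2 hpow_nonneg]
  · -- y < 0 < x
    rw [sign_mul_abs_rpow_of_nonneg hγ hx.le, sign_mul_abs_rpow_of_nonpos hγ hy.le]
    have h1 : (x - y) ^ γ ≤ (2 : ℝ) ^ (γ - 1) * (x ^ γ + (-y) ^ γ) := by
      have := aux_convex hγ hx.le (by linarith : (0:ℝ) ≤ -y)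
      have e : x + -y = x - y := by ring
      rwa [e] at this
    have h2pos : (0 : ℝ) < (2 : ℝ) ^ (1 - γ) := Real.rpow_pos_of_pos two_pos _
    have hmul : (2 : ℝ) ^ (1 - γ) * (2 : ℝ) ^ (γ - 1) = 1 := by
      rw [← Real.rpow_add two_pos]; norm_num
    have := mul_le_mul_of_nonneg_left h1 h2pos.le
    rw [← mul_assoc, hmul, one_mul] at this
    linarith

/-- For `γ ≥ 1`, the map `v ↦ sgn(v)|v|^γ` satisfies the reverse Hölder-type bound
`|sgn(x)|x|^γ - sgn(y)|y|^γ| ≥ 2^(1-γ) |x - y|^γ`. -/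
theorem sgn_rpow_reverse_holder
    (γ : ℝ) (hγ : 1 ≤ γ) (x y : ℝ) :
    (2 : ℝ) ^ (1 - γ) * |x - y| ^ γ ≤
      |Real.sign x * |x| ^ γ - Real.sign y * |y| ^ γ| := by
  rcases le_total y x with h | h
  · exact le_trans (key hγ h) (le_abs_self _)
  · rw [abs_sub_comm x y, abs_sub_comm (Real.sign x * |x| ^ γ)]
    exact le_trans (key hγ h) (le_abs_self _)
end

section
/- Let $t_0 > 0$, $\gamma \in [0,1)$, $\beta \neq 1$, $K > 0$ and $A \geq 0$. Let $g : [t_0,\infty) \to [0,\infty)$ be a function such that $s \mapsto s^{-\beta} g(s)^{\gamma}$ is continuous, and suppose that for all $t \geq t_0$, $g(t) \leq A\sqrt{t} + \int_{t_0}^{t} K s^{-\beta} g(s)^{\gamma} \, ds$. Then for all $t \geq t_0$, $g(t) \leq 2^{1/(1-\gamma)} \left[ A\sqrt{t} + \left( \dfrac{1-\gamma}{1-\beta} K \left( t^{1-\beta} - t_0^{1-\beta} \right) \right)^{1/(1-\gamma)} \right]$. -/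
/-!
If `H` is the right-hand side of the integral inequality, then `H' ≤ k H^γ`, hence
`(H^(1-γ))' ≤ (1-γ) k` and `H^(1-γ)` grows at most by `(1-γ) ∫ k` (Bihari's inequality).
On `[t0, T]` take the constant `A √T` and `k s = K s^(-β)`, whose integral is explicit; the
factor `2^(1/(1-γ))` comes from `x + y ≤ 2 max x y` when undoing the power `1 - γ`.
-/

open MeasureTheory intervalIntegral Set Filter Topology

theorem hasDerivAt_integral_of_continuousOn_Icc {f : ℝ → ℝ} {a b t : ℝ}
    (hf : ContinuousOn f (Icc a b)) (ht : t ∈ Ioo a b) :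
    HasDerivAt (fun u => ∫ s in a..u, f s) (f t) t :=
  integral_hasDerivAt_right
    ((hf.mono (Icc_subset_Icc_right ht.2.le)).intervalIntegrable_of_Icc ht.1.le)
    ((hf.mono Ioo_subset_Icc_self).stronglyMeasurableAtFilter isOpen_Ioo t ht)
    (hf.continuousAt (Icc_mem_nhds ht.1 ht.2))

theorem continuousOn_primitive_Icc {f : ℝ → ℝ} {a b : ℝ} (hab : a ≤ b)
    (hf : ContinuousOn f (Icc a b)) :
    ContinuousOn (fun u => ∫ s in a..u, f s) (Icc a b) := by
  simpa [uIcc_of_le hab] using continuousOn_primitive_interval (μ := volume)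
    (hf.integrableOn_Icc.mono_set (uIcc_of_le hab).subset)

theorem rpow_one_sub_le_add_integral_of_hasDerivAt_le {H H' k : ℝ → ℝ} {a b γ : ℝ}
    (hab : a ≤ b) (hγ : γ ≤ 1) (hk : ContinuousOn k (Icc a b))
    (hH : ContinuousOn H (Icc a b)) (hH_pos : ∀ t ∈ Icc a b, 0 < H t)
    (hH' : ∀ t ∈ Ioo a b, HasDerivAt H (H' t) t) (hH'_le : ∀ t ∈ Ioo a b, H' t ≤ k t * H t ^ γ) :
    H b ^ (1 - γ) ≤ H a ^ (1 - γ) + (1 - γ) * ∫ t in a..b, k t := by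
  set φ : ℝ → ℝ := fun t => H t ^ (1 - γ) - (1 - γ) * ∫ s in a..t, k s
  have hφ' : ∀ t ∈ Ioo a b,
      HasDerivAt φ (H' t * (1 - γ) * H t ^ (1 - γ - 1) - (1 - γ) * k t) t := fun t ht =>
    ((hH' t ht).rpow_const (Or.inl (hH_pos t (Ioo_subset_Icc_self ht)).ne')).sub
      ((hasDerivAt_integral_of_continuousOn_Icc hk ht).const_mul _)
  have hφ'_nonpos : ∀ t ∈ Ioo a b, H' t * (1 - γ) * H t ^ (1 - γ - 1) - (1 - γ) * k t ≤ 0 := by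
    intro t ht
    have hHt := hH_pos t (Ioo_subset_Icc_self ht)
    have hcancel : H t ^ γ * H t ^ (1 - γ - 1) = 1 := by
      rw [← Real.rpow_add hHt]; norm_num
    have hquot : H' t * H t ^ (1 - γ - 1) ≤ k t := by
      calc H' t * H t ^ (1 - γ - 1) ≤ k t * H t ^ γ * H t ^ (1 - γ - 1) := by
            gcongr; exact hH'_le t ht
        _ = k t := by rw [mul_assoc, hcancel, mul_one]
    linarith [mul_le_mul_of_nonneg_left hquot (sub_nonneg.2 hγ)]
  have hφ_anti : AntitoneOn φ (Icc a b) := by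
    refine antitoneOn_of_deriv_nonpos (convex_Icc a b) ?_ ?_ ?_
    · exact ((hH.rpow_const fun t ht => Or.inl (hH_pos t ht).ne').sub
        (continuousOn_const.mul (continuousOn_primitive_Icc hab hk)))
    · rw [interior_Icc]
      exact fun t ht => (hφ' t ht).differentiableAt.differentiableWithinAt
    · rw [interior_Icc]
      exact fun t ht => (hφ' t ht).deriv ▸ hφ'_nonpos t ht
  have := hφ_anti (left_mem_Icc.2 hab) (right_mem_Icc.2 hab) hab
  simp only [φ, integral_same, mul_zero, sub_zero] at this
  linarith

theorem bihari_rpow_of_pos {u k : ℝ → ℝ} {a b c γ : ℝ} (hab : a ≤ b) (hc : 0 < c)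
    (hγ0 : 0 ≤ γ) (hγ1 : γ ≤ 1) (hk : ContinuousOn k (Icc a b)) (hk0 : ∀ t ∈ Icc a b, 0 ≤ k t)
    (hu0 : ∀ t ∈ Icc a b, 0 ≤ u t) (hku : ContinuousOn (fun t => k t * u t ^ γ) (Icc a b))
    (hu : ∀ t ∈ Icc a b, u t ≤ c + ∫ s in a..t, k s * u s ^ γ) :
    u b ^ (1 - γ) ≤ c ^ (1 - γ) + (1 - γ) * ∫ t in a..b, k t := by
  set H : ℝ → ℝ := fun t => c + ∫ s in a..t, k s * u s ^ γ
  have hH_pos : ∀ t ∈ Icc a b, 0 < H t := fun t ht =>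
    add_pos_of_pos_of_nonneg hc <| integral_nonneg ht.1 fun s hs =>
      have hs' : s ∈ Icc a b := ⟨hs.1, hs.2.trans ht.2⟩
      mul_nonneg (hk0 s hs') (Real.rpow_nonneg (hu0 s hs') γ)
  have hH' : ∀ t ∈ Ioo a b, HasDerivAt H (k t * u t ^ γ) t := fun t ht =>
    (hasDerivAt_integral_of_continuousOn_Icc hku ht).const_add c
  have hH'_le : ∀ t ∈ Ioo a b, k t * u t ^ γ ≤ k t * H t ^ γ := fun t ht => by
    have ht' := Ioo_subset_Icc_self ht
    gcongr
    exacts [hk0 t ht', hu0 t ht', hu t ht']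
  have hHb := rpow_one_sub_le_add_integral_of_hasDerivAt_le (H := H) hab hγ1 hk
    (continuousOn_const.add (continuousOn_primitive_Icc hab hku)) hH_pos hH' hH'_le
  simp only [H, integral_same, add_zero] at hHb
  exact (Real.rpow_le_rpow (hu0 b (right_mem_Icc.2 hab)) (hu b (right_mem_Icc.2 hab))
    (sub_nonneg.2 hγ1)).trans hHb

theorem bihari_rpow {u k : ℝ → ℝ} {a b c γ : ℝ} (hab : a ≤ b) (hc : 0 ≤ c)
    (hγ0 : 0 ≤ γ) (hγ1 : γ ≤ 1) (hk : ContinuousOn k (Icc a b)) (hk0 : ∀ t ∈ Icc a b, 0 ≤ k t)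
    (hu0 : ∀ t ∈ Icc a b, 0 ≤ u t) (hku : ContinuousOn (fun t => k t * u t ^ γ) (Icc a b))
    (hu : ∀ t ∈ Icc a b, u t ≤ c + ∫ s in a..t, k s * u s ^ γ) :
    u b ^ (1 - γ) ≤ c ^ (1 - γ) + (1 - γ) * ∫ t in a..b, k t := by
  -- `H` may vanish when `c = 0`, so apply the case `c > 0` to `c + ε` and let `ε → 0`.
  have hlim : Tendsto (fun ε => (c + ε) ^ (1 - γ) + (1 - γ) * ∫ t in a..b, k t) (𝓝[>] 0)
      (𝓝 (c ^ (1 - γ) + (1 - γ) * ∫ t in a..b, k t)) := by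
    have : ContinuousAt (fun ε => (c + ε) ^ (1 - γ) + (1 - γ) * ∫ t in a..b, k t) 0 :=
      ((continuousAt_const.add continuousAt_id).rpow_const (Or.inr (sub_nonneg.2 hγ1))).add
        continuousAt_const
    simpa using this.tendsto.mono_left nhdsWithin_le_nhds
  refine ge_of_tendsto hlim (eventually_nhdsWithin_of_forall fun ε (hε : 0 < ε) => ?_)
  exact bihari_rpow_of_pos hab (add_pos_of_nonneg_of_pos hc hε) hγ0 hγ1 hk hk0 hu0 hku
    fun t ht => (hu t ht).trans (by linarith)

theorem le_two_rpow_inv_mul_add_rpow_inv {x c B q : ℝ} (hx : 0 ≤ x) (hc : 0 ≤ c) (hB : 0 ≤ B)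
    (hq : 0 < q) (h : x ^ q ≤ c ^ q + B) : x ≤ 2 ^ (1 / q) * (c + B ^ (1 / q)) := by
  have hBp : 0 ≤ B ^ (1 / q) := Real.rpow_nonneg hB _
  have hc_le : c ^ q ≤ (c + B ^ (1 / q)) ^ q :=
    Real.rpow_le_rpow hc (le_add_of_nonneg_right hBp) hq.le
  have hB_le : B ≤ (c + B ^ (1 / q)) ^ q := by
    calc B = (B ^ (1 / q)) ^ q := by
          rw [← Real.rpow_mul hB, one_div_mul_cancel hq.ne', Real.rpow_one]
      _ ≤ (c + B ^ (1 / q)) ^ q := Real.rpow_le_rpow hBp (le_add_of_nonneg_left hc) hq.le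
  rw [← Real.rpow_le_rpow_iff hx (by positivity) hq, Real.mul_rpow (by positivity) (by positivity),
    ← Real.rpow_mul zero_le_two, one_div_mul_cancel hq.ne', Real.rpow_one]
  linarith

/-- The deterministic Gronwall-type bound used to control the first moment of the
velocity process: if `g(t) ≤ A√t + ∫_{t0}^t K s^(-β) g(s)^γ ds`, then
`g(t) ≤ 2^(1/(1-γ)) [A√t + ((1-γ)/(1-β) K (t^(1-β) - t0^(1-β)))^(1/(1-γ))]`. -/
theorem moment_estimate_bound
    (t0 γ β K A : ℝ) (ht0 : 0 < t0) (hγ0 : 0 ≤ γ) (hγ1 : γ < 1)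
    (hβ : β ≠ 1) (hK : 0 < K) (hA : 0 ≤ A)
    (g : ℝ → ℝ) (hg : ∀ t, t0 ≤ t → 0 ≤ g t)
    (hcont : ContinuousOn (fun s => s ^ (-β) * g s ^ γ) (Set.Ici t0))
    (hineq : ∀ t, t0 ≤ t →
      g t ≤ A * Real.sqrt t + ∫ s in t0..t, K * s ^ (-β) * g s ^ γ) :
    ∀ t, t0 ≤ t →
      g t ≤ (2 : ℝ) ^ (1 / (1 - γ)) *
        (A * Real.sqrt t +
          ((1 - γ) / (1 - β) * K * (t ^ (1 - β) - t0 ^ (1 - β))) ^ (1 / (1 - γ))) := by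
  intro T hT
  have hk : ContinuousOn (fun s => K * s ^ (-β)) (Icc t0 T) :=
    continuousOn_const.mul (continuousOn_id.rpow_const fun s hs => Or.inl (ht0.trans_le hs.1).ne')
  have hk0 : ∀ s ∈ Icc t0 T, 0 ≤ K * s ^ (-β) := fun s hs =>
    mul_nonneg hK.le (Real.rpow_nonneg (ht0.le.trans hs.1) _)
  have hku : ContinuousOn (fun s => K * s ^ (-β) * g s ^ γ) (Icc t0 T) :=
    ((continuousOn_const.mul hcont).mono Icc_subset_Ici_self).congr fun s _ => mul_assoc _ _ _
  have hbound := bihari_rpow (c := A * √T) hT (by positivity) hγ0 hγ1.le hk hk0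
    (fun s hs => hg s hs.1) hku fun t ht =>
      (hineq t ht.1).trans (by gcongr; exact ht.2)
  have hintegral : (1 - γ) * ∫ s in t0..T, K * s ^ (-β) =
      (1 - γ) / (1 - β) * K * (T ^ (1 - β) - t0 ^ (1 - β)) := by
    have hβ' : 1 - β ≠ 0 := sub_ne_zero.2 hβ.symm
    rw [intervalIntegral.integral_const_mul, integral_rpow (Or.inr ⟨fun h => hβ' (by linarith),
      notMem_uIcc_of_lt ht0 (ht0.trans_le hT)⟩), neg_add_eq_sub]
    field_simp
  have hB : 0 ≤ (1 - γ) * ∫ s in t0..T, K * s ^ (-β) :=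
    mul_nonneg (sub_nonneg.2 hγ1.le) (integral_nonneg hT hk0)
  rw [hintegral] at hbound hB
  exact le_two_rpow_inv_mul_add_rpow_inv (hg T hT) (by positivity) hB (sub_pos.2 hγ1) hbound
end

section
/- Let $\rho > 0$, $\beta < 1$, $t_0 > 0$ and $v_0 \in \mathbb{R}$. Then there exists a constant $C > 0$ such that for all $t \geq t_0$, $\exp\left( -\dfrac{2\rho (t^{1-\beta} - t_0^{1-\beta})}{1-\beta} \right) v_0^2 + \int_{t_0}^{t} \exp\left( -\dfrac{2\rho (t^{1-\beta} - s^{1-\beta})}{1-\beta} \right) ds \leq C\, t^{\beta}$. -/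
set_option maxHeartbeats 1000000

open MeasureTheory intervalIntegral

lemma key_rpow_ineq {β s t : ℝ} (hβ : β < 1) (hs : 0 < s) (hst : s ≤ t) :
    min 1 (1 - β) * (t ^ (-β) * (t - s)) ≤ t ^ (1 - β) - s ^ (1 - β) := by
  have ht : 0 < t := lt_of_lt_of_le hs hst
  have htb : t ^ (1 - β) = t * t ^ (-β) := by
    rw [show (1 - β) = 1 + (-β) by ring, Real.rpow_add ht, Real.rpow_one]
  rcases le_or_gt β 0 with h0 | h0
  · have hmin : min 1 (1 - β) = 1 := min_eq_left (by linarith)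
    have hsb : s ^ (1 - β) ≤ s * t ^ (-β) := by
      have h1 : s ^ (1 - β) = s * s ^ (-β) := by
        rw [show (1 - β) = 1 + (-β) by ring, Real.rpow_add hs, Real.rpow_one]
      have h2 : s ^ (-β) ≤ t ^ (-β) := Real.rpow_le_rpow hs.le hst (by linarith)
      rw [h1]
      exact mul_le_mul_of_nonneg_left h2 hs.le
    rw [hmin, one_mul, htb]
    nlinarith [Real.rpow_nonneg (le_of_lt ht) (-β)]
  · have hmin : min 1 (1 - β) = 1 - β := min_eq_right (by linarith)
    have hb := rpow_one_add_le_one_add_mul_self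
      (s := s / t - 1) (by have := div_nonneg hs.le ht.le; linarith)
      (p := 1 - β) (by linarith) (by linarith)
    rw [add_sub_cancel] at hb
    have hdiv : (s / t) ^ (1 - β) = s ^ (1 - β) / t ^ (1 - β) :=
      Real.div_rpow hs.le ht.le _
    rw [hdiv] at hb
    have htp : 0 < t ^ (1 - β) := Real.rpow_pos_of_pos ht _
    have hb2 : s ^ (1 - β) ≤ t ^ (1 - β) * (1 + (1 - β) * (s / t - 1)) := by
      rw [div_le_iff₀ htp] at hb
      linarith [hb]
    have hexp : t ^ (1 - β) * (s / t - 1) = t ^ (-β) * s - t ^ (1 - β) := by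
      rw [htb]; field_simp
    rw [hmin]
    nlinarith [hb2, hexp]

/-- Second-moment bound for the velocity process in the linear sub-critical case:
the solution of the comparison ODE is bounded by `C t^β`. -/
theorem second_moment_ode_bound
    (ρ β t0 v0 : ℝ) (hρ : 0 < ρ) (hβ : β < 1) (ht0 : 0 < t0) :
    ∃ C : ℝ, 0 < C ∧ ∀ t : ℝ, t0 ≤ t →
      Real.exp (-(2 * ρ * (t ^ (1 - β) - t0 ^ (1 - β)) / (1 - β))) * v0 ^ 2 +
          (∫ s in t0..t,
            Real.exp (-(2 * ρ * (t ^ (1 - β) - s ^ (1 - β)) / (1 - β)))) ≤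
        C * t ^ β := by
  have hp : 0 < 1 - β := by linarith
  set c : ℝ := min 1 (1 - β) with hc
  have hcpos : 0 < c := lt_min one_pos hp
  set k : ℝ := 2 * ρ * c / (1 - β) with hk
  have hkpos : 0 < k := by positivity
  set m0 : ℝ := min (t0 ^ β) ((2 * t0) ^ β) with hm0
  have hm0pos : 0 < m0 :=
    lt_min (Real.rpow_pos_of_pos ht0 β) (Real.rpow_pos_of_pos (by linarith) β)
  refine ⟨v0 ^ 2 / m0 + 2 * v0 ^ 2 / (k * t0) + 1 / k + 1, by positivity, ?_⟩
  intro t ht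
  have htpos : 0 < t := lt_of_lt_of_le ht0 ht
  have htb : 0 < t ^ β := Real.rpow_pos_of_pos htpos β
  have htnb : 0 < t ^ (-β) := Real.rpow_pos_of_pos htpos (-β)
  have ht1b : t ^ (1 - β) = t * t ^ (-β) := by
    rw [show (1 - β) = 1 + (-β) by ring, Real.rpow_add htpos, Real.rpow_one]
  -- pointwise exponent comparison
  have hexp : ∀ s, t0 ≤ s → s ≤ t →
      Real.exp (-(2 * ρ * (t ^ (1 - β) - s ^ (1 - β)) / (1 - β))) ≤
        Real.exp (-(k * (t ^ (-β) * (t - s)))) := by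
    intro s hs1 hs2
    apply Real.exp_le_exp.mpr
    have hkey := key_rpow_ineq hβ (lt_of_lt_of_le ht0 hs1) hs2
    have h2 : k * (t ^ (-β) * (t - s)) ≤ 2 * ρ * (t ^ (1 - β) - s ^ (1 - β)) / (1 - β) := by
      have hmul := mul_le_mul_of_nonneg_left hkey
        (le_of_lt (by positivity : (0:ℝ) < 2 * ρ / (1 - β)))
      calc k * (t ^ (-β) * (t - s))
          = (2 * ρ / (1 - β)) * (c * (t ^ (-β) * (t - s))) := by rw [hk]; ring
        _ ≤ (2 * ρ / (1 - β)) * (t ^ (1 - β) - s ^ (1 - β)) := hmul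
        _ = 2 * ρ * (t ^ (1 - β) - s ^ (1 - β)) / (1 - β) := by ring
    linarith
  -- first term bound
  have hterm1 : Real.exp (-(2 * ρ * (t ^ (1 - β) - t0 ^ (1 - β)) / (1 - β))) * v0 ^ 2 ≤
      (v0 ^ 2 / m0 + 2 * v0 ^ 2 / (k * t0)) * t ^ β := by
    have hv0 : (0:ℝ) ≤ v0 ^ 2 := sq_nonneg v0
    rcases le_or_gt t (2 * t0) with hcase | hcase
    · have he1 : Real.exp (-(2 * ρ * (t ^ (1 - β) - t0 ^ (1 - β)) / (1 - β))) ≤ 1 := by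
        rw [Real.exp_le_one_iff]
        have hmono : t0 ^ (1 - β) ≤ t ^ (1 - β) := Real.rpow_le_rpow ht0.le ht hp.le
        have : 0 ≤ 2 * ρ * (t ^ (1 - β) - t0 ^ (1 - β)) / (1 - β) :=
          div_nonneg (mul_nonneg (by linarith) (by linarith)) hp.le
        linarith
      have hm : m0 ≤ t ^ β := by
        rcases le_or_gt 0 β with hb | hb
        · exact le_trans (min_le_left _ _) (Real.rpow_le_rpow ht0.le ht hb)
        · exact le_trans (min_le_right _ _) (Real.rpow_le_rpow_of_nonpos htpos hcase hb.le)
      have h1 : Real.exp (-(2 * ρ * (t ^ (1 - β) - t0 ^ (1 - β)) / (1 - β))) * v0 ^ 2 ≤ v0 ^ 2 := by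
        nlinarith [Real.exp_pos (-(2 * ρ * (t ^ (1 - β) - t0 ^ (1 - β)) / (1 - β)))]
      have h2 : v0 ^ 2 ≤ v0 ^ 2 / m0 * t ^ β := by
        rw [div_mul_eq_mul_div, le_div_iff₀ hm0pos]
        exact mul_le_mul_of_nonneg_left hm hv0
      have h3 : 0 ≤ 2 * v0 ^ 2 / (k * t0) * t ^ β := by positivity
      nlinarith
    · set x : ℝ := k * (t ^ (-β) * (t - t0)) with hx
      have hxpos : 0 < x := by
        have : 0 < t - t0 := by linarith
        positivity
      have he := hexp t0 le_rfl ht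
      have he2 : Real.exp (-x) ≤ 1 / x := by
        rw [Real.exp_neg, one_div]
        exact inv_anti₀ hxpos (by linarith [Real.add_one_le_exp x])
      have hge : k * t ^ (1 - β) / 2 ≤ x := by
        have h1 : t / 2 ≤ t - t0 := by linarith
        calc k * t ^ (1 - β) / 2 = k * (t ^ (-β) * (t / 2)) := by rw [ht1b]; ring
          _ ≤ x := by
              rw [hx]
              exact mul_le_mul_of_nonneg_left
                (mul_le_mul_of_nonneg_left h1 htnb.le) hkpos.le
      have htp : 0 < t ^ (1 - β) := Real.rpow_pos_of_pos htpos _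
      have h1x : 1 / x ≤ 2 / (k * t ^ (1 - β)) := by
        rw [div_le_div_iff₀ hxpos (by positivity)]
        nlinarith
      have heq : 2 / (k * t ^ (1 - β)) = 2 * t ^ β / (k * t) := by
        have : t ^ (1 - β) * t ^ β = t := by
          rw [← Real.rpow_add htpos]; norm_num
        field_simp
        nlinarith [this]
      have hfin : 2 / (k * t ^ (1 - β)) ≤ 2 / (k * t0) * t ^ β := by
        rw [heq]
        rw [div_le_iff₀ (by positivity : (0:ℝ) < k * t)]
        rw [div_mul_eq_mul_div, div_mul_eq_mul_div, le_div_iff₀ (by positivity : (0:ℝ) < k * t0)]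
        nlinarith [htb]
      have hchain : Real.exp (-(2 * ρ * (t ^ (1 - β) - t0 ^ (1 - β)) / (1 - β))) ≤
          2 / (k * t0) * t ^ β := le_trans he (le_trans he2 (le_trans h1x hfin))
      have h3 : 0 ≤ v0 ^ 2 / m0 * t ^ β := by positivity
      calc Real.exp (-(2 * ρ * (t ^ (1 - β) - t0 ^ (1 - β)) / (1 - β))) * v0 ^ 2
          ≤ 2 / (k * t0) * t ^ β * v0 ^ 2 := mul_le_mul_of_nonneg_right hchain hv0
        _ = 2 * v0 ^ 2 / (k * t0) * t ^ β := by ring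
        _ ≤ (v0 ^ 2 / m0 + 2 * v0 ^ 2 / (k * t0)) * t ^ β := by rw [add_mul]; linarith
  -- integral bound
  have hint : (∫ s in t0..t,
        Real.exp (-(2 * ρ * (t ^ (1 - β) - s ^ (1 - β)) / (1 - β)))) ≤ 1 / k * t ^ β := by
    set a : ℝ := k * t ^ (-β) with ha
    have hapos : 0 < a := by positivity
    have huIcc : Set.uIcc t0 t = Set.Icc t0 t := Set.uIcc_of_le ht
    have hcont1 : ContinuousOn
        (fun s => Real.exp (-(2 * ρ * (t ^ (1 - β) - s ^ (1 - β)) / (1 - β))))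
        (Set.uIcc t0 t) := by
      apply Real.continuous_exp.comp_continuousOn
      apply ContinuousOn.neg
      apply ContinuousOn.div_const
      apply ContinuousOn.mul continuousOn_const
      apply ContinuousOn.sub continuousOn_const
      intro s hs
      rw [huIcc] at hs
      exact (Real.continuousAt_rpow_const s _
        (Or.inl (ne_of_gt (lt_of_lt_of_le ht0 hs.1)))).continuousWithinAt
    have hcont2 : Continuous (fun s : ℝ => Real.exp (-(k * (t ^ (-β) * (t - s))))) :=
      by fun_prop
    have hmono : (∫ s in t0..t,
          Real.exp (-(2 * ρ * (t ^ (1 - β) - s ^ (1 - β)) / (1 - β)))) ≤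
        ∫ s in t0..t, Real.exp (-(k * (t ^ (-β) * (t - s)))) := by
      apply intervalIntegral.integral_mono_on ht
        (hcont1.intervalIntegrable) (hcont2.intervalIntegrable _ _)
      intro s hs
      exact hexp s hs.1 hs.2
    have hderiv : ∀ s ∈ Set.uIcc t0 t,
        HasDerivAt (fun x => Real.exp (a * (x - t)) / a)
          (Real.exp (-(k * (t ^ (-β) * (t - s))))) s := by
      intro s _
      have h1 : HasDerivAt (fun x : ℝ => a * (x - t)) a s := by
        simpa using ((hasDerivAt_id s).sub_const t).const_mul a
      have h2 := (h1.exp).div_const a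
      have h3 : Real.exp (a * (s - t)) * a / a = Real.exp (-(k * (t ^ (-β) * (t - s)))) := by
        rw [mul_div_assoc, div_self (ne_of_gt hapos), mul_one]
        congr 1
        rw [ha]; ring
      rw [h3] at h2
      exact h2
    have hcalc : (∫ s in t0..t, Real.exp (-(k * (t ^ (-β) * (t - s))))) =
        Real.exp (a * (t - t)) / a - Real.exp (a * (t0 - t)) / a := by
      apply intervalIntegral.integral_eq_sub_of_hasDerivAt hderiv
      exact (hcont2.intervalIntegrable _ _)
    have hle : Real.exp (a * (t - t)) / a - Real.exp (a * (t0 - t)) / a ≤ 1 / a := by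
      have h0 : a * (t - t) = 0 := by ring
      rw [h0, Real.exp_zero]
      have h4 : 0 ≤ Real.exp (a * (t0 - t)) / a := by positivity
      linarith
    have hainv : 1 / a = 1 / k * t ^ β := by
      rw [ha, Real.rpow_neg htpos.le]
      field_simp
    calc (∫ s in t0..t,
          Real.exp (-(2 * ρ * (t ^ (1 - β) - s ^ (1 - β)) / (1 - β))))
        ≤ ∫ s in t0..t, Real.exp (-(k * (t ^ (-β) * (t - s)))) := hmono
      _ = Real.exp (a * (t - t)) / a - Real.exp (a * (t0 - t)) / a := hcalc
      _ ≤ 1 / a := hle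
      _ = 1 / k * t ^ β := hainv
  calc Real.exp (-(2 * ρ * (t ^ (1 - β) - t0 ^ (1 - β)) / (1 - β))) * v0 ^ 2 +
        (∫ s in t0..t, Real.exp (-(2 * ρ * (t ^ (1 - β) - s ^ (1 - β)) / (1 - β))))
      ≤ (v0 ^ 2 / m0 + 2 * v0 ^ 2 / (k * t0)) * t ^ β + 1 / k * t ^ β :=
        add_le_add hterm1 hint
    _ ≤ (v0 ^ 2 / m0 + 2 * v0 ^ 2 / (k * t0) + 1 / k + 1) * t ^ β := by nlinarith [htb]
end
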